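/- Let G₁ and G₂ be simple connected graphs with n₁ = |V(G₁)|, n₂ = |V(G₂)| vertices and m₁ = |E(G₁)|, m₂ = |E(G₂)| edges. Then the F-index of the vertex S-join satisfies F(G₁ ∨̇_S G₂) = F(G₁) + F(G₂) + 3n₂M₁(G₁) + 3n₁M₁(G₂) + 6m₁n₂² + 6m₂n₁² + n₁n₂(n₁² + n₂²) + 8m₁. -/

import Mathlib

/-! In `G₁ ∨̇_S G₂` a vertex `v` of `G₁` has degree `d_{G₁}(v) + n₂`, an inserted vertex has
degree `2`, and a vertex `w` of `G₂` has degree `n₁ + d_{G₂}(w)`. Expanding the cubes of these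
shifted degrees and using `∑ d = 2m` gives the formula. -/

/-- The subdivision graph `S(G)`: a new vertex is inserted into each edge of `G`
(each edge is replaced by a path of length 2). The inserted vertices form the
right summand `↥G.edgeSet`. -/
def Sgraph {V : Type*} (G : SimpleGraph V) : SimpleGraph (V ⊕ ↥G.edgeSet) where
  Adj x y :=
    match x, y with
    | Sum.inl v, Sum.inr e => v ∈ (e : Sym2 V)
    | Sum.inr e, Sum.inl v => v ∈ (e : Sym2 V)
    | _, _ => False
  symm := by constructor; rintro (v | e) (w | f) h <;> exact h
  loopless := by constructor; rintro (v | e) h <;> exact h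

/-- The graph `R(G)`: obtained from `G` by inserting a new vertex into each edge of `G`
and joining each new vertex to the end vertices of its corresponding edge. -/
def Rgraph {V : Type*} (G : SimpleGraph V) : SimpleGraph (V ⊕ ↥G.edgeSet) where
  Adj x y :=
    match x, y with
    | Sum.inl v, Sum.inl w => G.Adj v w
    | Sum.inl v, Sum.inr e => v ∈ (e : Sym2 V)
    | Sum.inr e, Sum.inl v => v ∈ (e : Sym2 V)
    | Sum.inr _, Sum.inr _ => False
  symm := by
    constructor
    rintro (v | e) (w | f) h
    · exact G.symm.symm _ _ h
    · exact h
    · exact h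
    · exact h
  loopless := by
    constructor
    rintro (v | e) h
    · exact G.loopless.irrefl v h
    · exact h

/-- The graph `Q(G)`: obtained from `G` by inserting a new vertex into each edge of `G`,
then joining by edges those pairs of new vertices lying on adjacent edges of `G`. -/
def Qgraph {V : Type*} (G : SimpleGraph V) : SimpleGraph (V ⊕ ↥G.edgeSet) where
  Adj x y :=
    match x, y with
    | Sum.inl _, Sum.inl _ => False
    | Sum.inl v, Sum.inr e => v ∈ (e : Sym2 V)
    | Sum.inr e, Sum.inl v => v ∈ (e : Sym2 V)
    | Sum.inr e, Sum.inr f => e ≠ f ∧ ∃ v, v ∈ (e : Sym2 V) ∧ v ∈ (f : Sym2 V)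
  symm := by
    constructor
    rintro (v | e) (w | f) h
    · exact h
    · exact h
    · exact h
    · exact ⟨h.1.symm, by obtain ⟨v, h1, h2⟩ := h.2; exact ⟨v, h2, h1⟩⟩
  loopless := by
    constructor
    rintro (v | e) h
    · exact h
    · exact h.1 rfl

/-- The total graph `T(G)`: obtained from `G` by inserting a new vertex into each edge,
joining each new vertex to the end vertices of its corresponding edge, and joining by
edges those pairs of new vertices lying on adjacent edges of `G`. -/
def Tgraph {V : Type*} (G : SimpleGraph V) : SimpleGraph (V ⊕ ↥G.edgeSet) where
  Adj x y :=
    match x, y with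
    | Sum.inl v, Sum.inl w => G.Adj v w
    | Sum.inl v, Sum.inr e => v ∈ (e : Sym2 V)
    | Sum.inr e, Sum.inl v => v ∈ (e : Sym2 V)
    | Sum.inr e, Sum.inr f => e ≠ f ∧ ∃ v, v ∈ (e : Sym2 V) ∧ v ∈ (f : Sym2 V)
  symm := by
    constructor
    rintro (v | e) (w | f) h
    · exact G.symm.symm _ _ h
    · exact h
    · exact h
    · exact ⟨h.1.symm, by obtain ⟨v, h1, h2⟩ := h.2; exact ⟨v, h2, h1⟩⟩
  loopless := by
    constructor
    rintro (v | e) h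
    · exact G.loopless.irrefl v h
    · exact h.1 rfl

/-- The disjoint union of `H` and `K` together with all edges joining a vertex `a` of `H`
with `P a` to every vertex of `K`. -/
def joinOn {A B : Type*} (H : SimpleGraph A) (K : SimpleGraph B) (P : A → Prop) :
    SimpleGraph (A ⊕ B) where
  Adj x y :=
    match x, y with
    | Sum.inl a, Sum.inl a' => H.Adj a a'
    | Sum.inr b, Sum.inr b' => K.Adj b b'
    | Sum.inl a, Sum.inr _ => P a
    | Sum.inr _, Sum.inl a => P a
  symm := by
    constructor
    rintro (a | b) (a' | b') h
    · exact H.symm.symm _ _ h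
    · exact h
    · exact h
    · exact K.symm.symm _ _ h
  loopless := by
    constructor
    rintro (a | b) h
    · exact H.loopless.irrefl a h
    · exact K.loopless.irrefl b h

/-- The vertex S-join `G₁ ∨̇_S G₂`: obtained from `S(G₁)` and `G₂` by joining each vertex
of `V(G₁)` to every vertex of `G₂`. -/
def vertexSJoin {V₁ V₂ : Type*} (G₁ : SimpleGraph V₁) (G₂ : SimpleGraph V₂) :
    SimpleGraph ((V₁ ⊕ ↥G₁.edgeSet) ⊕ V₂) :=
  joinOn (Sgraph G₁) G₂ (fun x => x.isLeft)

/-- The edge S-join `G₁ ∨̱_S G₂`: obtained from `S(G₁)` and `G₂` by joining each inserted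
vertex (each vertex of `I(G₁)`) to every vertex of `G₂`. -/
def edgeSJoin {V₁ V₂ : Type*} (G₁ : SimpleGraph V₁) (G₂ : SimpleGraph V₂) :
    SimpleGraph ((V₁ ⊕ ↥G₁.edgeSet) ⊕ V₂) :=
  joinOn (Sgraph G₁) G₂ (fun x => x.isRight)

/-- The vertex R-join `G₁ ∨̇_R G₂`. -/
def vertexRJoin {V₁ V₂ : Type*} (G₁ : SimpleGraph V₁) (G₂ : SimpleGraph V₂) :
    SimpleGraph ((V₁ ⊕ ↥G₁.edgeSet) ⊕ V₂) :=
  joinOn (Rgraph G₁) G₂ (fun x => x.isLeft)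

/-- The edge R-join `G₁ ∨̱_R G₂`. -/
def edgeRJoin {V₁ V₂ : Type*} (G₁ : SimpleGraph V₁) (G₂ : SimpleGraph V₂) :
    SimpleGraph ((V₁ ⊕ ↥G₁.edgeSet) ⊕ V₂) :=
  joinOn (Rgraph G₁) G₂ (fun x => x.isRight)

/-- The vertex Q-join `G₁ ∨̇_Q G₂`. -/
def vertexQJoin {V₁ V₂ : Type*} (G₁ : SimpleGraph V₁) (G₂ : SimpleGraph V₂) :
    SimpleGraph ((V₁ ⊕ ↥G₁.edgeSet) ⊕ V₂) :=
  joinOn (Qgraph G₁) G₂ (fun x => x.isLeft)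

/-- The edge Q-join `G₁ ∨̱_Q G₂`. -/
def edgeQJoin {V₁ V₂ : Type*} (G₁ : SimpleGraph V₁) (G₂ : SimpleGraph V₂) :
    SimpleGraph ((V₁ ⊕ ↥G₁.edgeSet) ⊕ V₂) :=
  joinOn (Qgraph G₁) G₂ (fun x => x.isRight)

/-- The vertex T-join `G₁ ∨̇_T G₂`. -/
def vertexTJoin {V₁ V₂ : Type*} (G₁ : SimpleGraph V₁) (G₂ : SimpleGraph V₂) :
    SimpleGraph ((V₁ ⊕ ↥G₁.edgeSet) ⊕ V₂) :=
  joinOn (Tgraph G₁) G₂ (fun x => x.isLeft)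

/-- The edge T-join `G₁ ∨̱_T G₂`. -/
def edgeTJoin {V₁ V₂ : Type*} (G₁ : SimpleGraph V₁) (G₂ : SimpleGraph V₂) :
    SimpleGraph ((V₁ ⊕ ↥G₁.edgeSet) ⊕ V₂) :=
  joinOn (Tgraph G₁) G₂ (fun x => x.isRight)

/-- Degree of a vertex in a graph on a finite vertex type. -/
noncomputable def gdeg {V : Type*} [Finite V] (G : SimpleGraph V) (v : V) : ℕ :=
  haveI : Fintype ↥(G.neighborSet v) := Fintype.ofFinite _
  G.degree v

/-- The forgotten topological index (F-index): `F(G) = ∑_{v ∈ V(G)} d_G(v)³`. -/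
noncomputable def Findex {V : Type*} [Finite V] (G : SimpleGraph V) : ℕ :=
  haveI := Fintype.ofFinite V
  ∑ v : V, gdeg G v ^ 3

/-- The first Zagreb index: `M₁(G) = ∑_{v ∈ V(G)} d_G(v)²`. -/
noncomputable def M1 {V : Type*} [Finite V] (G : SimpleGraph V) : ℕ :=
  haveI := Fintype.ofFinite V
  ∑ v : V, gdeg G v ^ 2

/-- `M₄(G) = ∑_{v ∈ V(G)} d_G(v)⁴`. -/
noncomputable def M4 {V : Type*} [Finite V] (G : SimpleGraph V) : ℕ :=
  haveI := Fintype.ofFinite V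
  ∑ v : V, gdeg G v ^ 4

/-- The hyper Zagreb index: `HM(G) = ∑_{uv ∈ E(G)} (d_G(u) + d_G(v))²`. -/
noncomputable def HM {V : Type*} [Finite V] (G : SimpleGraph V) : ℕ :=
  haveI : Fintype ↥G.edgeSet := Fintype.ofFinite _
  ∑ e : ↥G.edgeSet,
    Sym2.lift ⟨fun u v => (gdeg G u + gdeg G v) ^ 2,
      fun u v => by dsimp only; rw [add_comm]⟩ (e : Sym2 V)

/-- The redefined Zagreb index:
`ReZM(G) = ∑_{uv ∈ E(G)} d_G(u) d_G(v) (d_G(u) + d_G(v))`. -/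
noncomputable def ReZM {V : Type*} [Finite V] (G : SimpleGraph V) : ℕ :=
  haveI : Fintype ↥G.edgeSet := Fintype.ofFinite _
  ∑ e : ↥G.edgeSet,
    Sym2.lift ⟨fun u v => gdeg G u * gdeg G v * (gdeg G u + gdeg G v),
      fun u v => by dsimp only; ring⟩ (e : Sym2 V)

/-- The number of edges of `G`. -/
noncomputable def numEdges {V : Type*} (G : SimpleGraph V) : ℕ :=
  Nat.card ↥G.edgeSet

open Finset

lemma gdeg_eq_card_neighborSet {V : Type*} [Finite V] (G : SimpleGraph V) (v : V) :
    gdeg G v = Nat.card (G.neighborSet v) := by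
  let : Fintype (G.neighborSet v) := Fintype.ofFinite _
  rw [gdeg, Nat.card_eq_fintype_card, SimpleGraph.card_neighborSet_eq_degree]

lemma sum_gdeg_eq_two_mul_numEdges {V : Type*} [Fintype V] (G : SimpleGraph V) :
    ∑ v, gdeg G v = 2 * numEdges G := by
  classical
  rw [numEdges, Nat.card_eq_fintype_card, ← Set.toFinset_card, ← SimpleGraph.edgeFinset,
    ← G.sum_degrees_eq_twice_card_edges]
  refine sum_congr rfl fun v _ => ?_
  rw [gdeg_eq_card_neighborSet, Nat.card_eq_fintype_card, SimpleGraph.card_neighborSet_eq_degree]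

lemma card_edges_containing {V : Type*} [Finite V] (G : SimpleGraph V) (v : V) :
    Nat.card {e : G.edgeSet // v ∈ (e : Sym2 V)} = gdeg G v := by
  classical
  let toIncidence : {e : G.edgeSet // v ∈ (e : Sym2 V)} ≃ G.incidenceSet v :=
    { toFun := fun e => ⟨e.1.1, e.1.2, e.2⟩
      invFun := fun e => ⟨⟨e.1, e.2.1⟩, e.2.2⟩ }
  rw [Nat.card_congr (toIncidence.trans (G.incidenceSetEquivNeighborSet v)),
    gdeg_eq_card_neighborSet]

lemma card_mem_edge {V : Type*} (G : SimpleGraph V) (e : G.edgeSet) :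
    Nat.card {v : V // v ∈ (e : Sym2 V)} = 2 := by
  classical
  rw [← Sym2.card_toFinset_of_not_isDiag _ (G.not_isDiag_of_mem_edgeSet e.2),
    ← Nat.card_eq_finsetCard]
  exact Nat.card_congr (Equiv.subtypeEquivRight fun _ => Sym2.mem_toFinset.symm)

section joinOn

variable {A B : Type*} [Finite A] [Finite B] (H : SimpleGraph A) (K : SimpleGraph B)
  (P : A → Prop)

lemma gdeg_joinOn_inl (a : A) [Decidable (P a)] :
    gdeg (joinOn H K P) (.inl a) = gdeg H a + if P a then Nat.card B else 0 := by
  rw [gdeg_eq_card_neighborSet, gdeg_eq_card_neighborSet,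
    Nat.card_congr Equiv.subtypeSum, Nat.card_sum]
  congr 1
  split_ifs with ha
  · exact Nat.card_congr (Equiv.subtypeUnivEquiv fun _ => ha)
  · exact @Nat.card_of_isEmpty _ ⟨fun b => ha b.2⟩

lemma gdeg_joinOn_inr (b : B) :
    gdeg (joinOn H K P) (.inr b) = Nat.card {a // P a} + gdeg K b := by
  rw [gdeg_eq_card_neighborSet, gdeg_eq_card_neighborSet,
    Nat.card_congr Equiv.subtypeSum, Nat.card_sum]
  rfl

end joinOn

section Sgraph

variable {V : Type*} [Finite V] (G : SimpleGraph V)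

lemma gdeg_Sgraph_inl (v : V) : gdeg (Sgraph G) (.inl v) = gdeg G v := by
  rw [gdeg_eq_card_neighborSet, Nat.card_congr Equiv.subtypeSum, Nat.card_sum,
    ← card_edges_containing]
  simp [Sgraph]

lemma gdeg_Sgraph_inr (e : G.edgeSet) : gdeg (Sgraph G) (.inr e) = 2 := by
  rw [gdeg_eq_card_neighborSet, Nat.card_congr Equiv.subtypeSum, Nat.card_sum,
    ← card_mem_edge G e]
  simp [Sgraph]

end Sgraph

section vertexSJoin

variable {V₁ V₂ : Type*} [Finite V₁] [Finite V₂] (G₁ : SimpleGraph V₁) (G₂ : SimpleGraph V₂)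

lemma gdeg_vertexSJoin_inl_inl (v : V₁) :
    gdeg (vertexSJoin G₁ G₂) (.inl (.inl v)) = gdeg G₁ v + Nat.card V₂ := by
  rw [vertexSJoin, gdeg_joinOn_inl, gdeg_Sgraph_inl, Sum.isLeft_inl, if_pos rfl]

lemma gdeg_vertexSJoin_inl_inr (e : G₁.edgeSet) :
    gdeg (vertexSJoin G₁ G₂) (.inl (.inr e)) = 2 := by
  rw [vertexSJoin, gdeg_joinOn_inl, gdeg_Sgraph_inr, Sum.isLeft_inr, if_neg Bool.false_ne_true]

lemma gdeg_vertexSJoin_inr (w : V₂) :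
    gdeg (vertexSJoin G₁ G₂) (.inr w) = Nat.card V₁ + gdeg G₂ w := by
  rw [vertexSJoin, gdeg_joinOn_inr, Nat.card_congr Equiv.sumIsLeft]

end vertexSJoin

lemma Findex_eq_sum {V : Type*} [Fintype V] (G : SimpleGraph V) :
    Findex G = ∑ v, gdeg G v ^ 3 := by
  rw [Findex]
  congr!

lemma M1_eq_sum {V : Type*} [Fintype V] (G : SimpleGraph V) :
    M1 G = ∑ v, gdeg G v ^ 2 := by
  rw [M1]
  congr!

lemma sum_gdeg_add_pow_three {V : Type*} [Fintype V] (G : SimpleGraph V) (c : ℕ) :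
    ∑ v, (gdeg G v + c) ^ 3 =
      Findex G + 3 * c * M1 G + 6 * c ^ 2 * numEdges G + Fintype.card V * c ^ 3 := by
  have binomial (d : ℕ) : (d + c) ^ 3 = d ^ 3 + 3 * c * d ^ 2 + 3 * c ^ 2 * d + c ^ 3 := by ring
  simp only [binomial, sum_add_distrib, ← mul_sum, sum_const, card_univ, smul_eq_mul]
  rw [Findex_eq_sum, M1_eq_sum, sum_gdeg_eq_two_mul_numEdges]
  ring

lemma Findex_vertexSJoin_eq_sum {V₁ V₂ : Type*} [Fintype V₁] [Fintype V₂]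
    (G₁ : SimpleGraph V₁) (G₂ : SimpleGraph V₂) :
    Findex (vertexSJoin G₁ G₂) = ∑ v, (gdeg G₁ v + Fintype.card V₂) ^ 3
      + 2 ^ 3 * numEdges G₁ + ∑ w, (gdeg G₂ w + Fintype.card V₁) ^ 3 := by
  have : Fintype G₁.edgeSet := Fintype.ofFinite _
  simp only [Findex_eq_sum, Fintype.sum_sum_type, gdeg_vertexSJoin_inl_inl, gdeg_vertexSJoin_inl_inr,
    gdeg_vertexSJoin_inr, Nat.card_eq_fintype_card, sum_const, card_univ, smul_eq_mul, numEdges,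
    add_comm (Fintype.card V₁)]
  ring

theorem Findex_vertexSJoin_general {V₁ V₂ : Type*} [Finite V₁] [Finite V₂]
    (G₁ : SimpleGraph V₁) (G₂ : SimpleGraph V₂)
    (n₁ n₂ m₁ m₂ : ℕ)
    (hn₁ : n₁ = Nat.card V₁) (hn₂ : n₂ = Nat.card V₂)
    (hm₁ : m₁ = numEdges G₁) (hm₂ : m₂ = numEdges G₂) :
    (Findex (vertexSJoin G₁ G₂) : ℤ) =
      (Findex G₁ : ℤ) + (Findex G₂ : ℤ) + 3 * (n₂ : ℤ) * (M1 G₁ : ℤ) + 3 * (n₁ : ℤ) * (M1 G₂ : ℤ)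
        + 6 * (m₁ : ℤ) * (n₂ : ℤ) ^ 2 + 6 * (m₂ : ℤ) * (n₁ : ℤ) ^ 2
        + (n₁ : ℤ) * (n₂ : ℤ) * ((n₁ : ℤ) ^ 2 + (n₂ : ℤ) ^ 2) + 8 * (m₁ : ℤ) := by
  have := Fintype.ofFinite V₁
  have := Fintype.ofFinite V₂
  rw [Findex_vertexSJoin_eq_sum, sum_gdeg_add_pow_three, sum_gdeg_add_pow_three]
  subst hn₁ hn₂ hm₁ hm₂
  simp only [Nat.card_eq_fintype_card]
  push_cast
  ring

theorem Findex_vertexSJoin {V₁ V₂ : Type*} [Finite V₁] [Finite V₂]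
    (G₁ : SimpleGraph V₁) (G₂ : SimpleGraph V₂)
    (hc₁ : G₁.Connected) (hc₂ : G₂.Connected)
    (n₁ n₂ m₁ m₂ : ℕ)
    (hn₁ : n₁ = Nat.card V₁) (hn₂ : n₂ = Nat.card V₂)
    (hm₁ : m₁ = numEdges G₁) (hm₂ : m₂ = numEdges G₂) :
    (Findex (vertexSJoin G₁ G₂) : ℤ) =
      (Findex G₁ : ℤ) + (Findex G₂ : ℤ) + 3 * (n₂ : ℤ) * (M1 G₁ : ℤ) + 3 * (n₁ : ℤ) * (M1 G₂ : ℤ)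
        + 6 * (m₁ : ℤ) * (n₂ : ℤ) ^ 2 + 6 * (m₂ : ℤ) * (n₁ : ℤ) ^ 2
        + (n₁ : ℤ) * (n₂ : ℤ) * ((n₁ : ℤ) ^ 2 + (n₂ : ℤ) ^ 2) + 8 * (m₁ : ℤ) :=
  Findex_vertexSJoin_general G₁ G₂ n₁ n₂ m₁ m₂ hn₁ hn₂ hm₁ hm₂
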